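/- arXiv:0912.3031 — 2 statements merged into one kernel-verified Lean document; each statement's English description precedes it below -/
import Mathlib

section
/- For $a > 0$, $\beta \in \mathbb{R}$, the function $f(s) = \Phi\left(\frac{a + \beta s}{\sqrt{s}}\right) - e^{-2\beta a}\,\Phi\left(\frac{-a + \beta s}{\sqrt{s}}\right)$ is nonincreasing on $(0,\infty)$. -/
/-!
Writing `A = (a + βs)/√s` and `B = (-a + βs)/√s`, we have `A² - B² = 4aβ`, so the Gaussian
density satisfies the reflection identity `exp(-2βa) φ(B) = φ(A)`. By the chain rule the
derivative of the survival probability is `φ(A) A' - exp(-2βa) φ(B) B' = φ(A) (A' - B')`,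
and `A' - B' = -a / s^{3/2} < 0`.
-/

open Real MeasureTheory

/-- The standard normal cumulative distribution function `Φ`. -/
noncomputable def stdNormalCDF (x : ℝ) : ℝ :=
  ∫ u in Set.Iic x, Real.exp (-u ^ 2 / 2) / Real.sqrt (2 * Real.pi)

noncomputable def stdNormalPDF (x : ℝ) : ℝ :=
  Real.exp (-x ^ 2 / 2) / Real.sqrt (2 * Real.pi)

lemma continuous_stdNormalPDF : Continuous stdNormalPDF := by
  unfold stdNormalPDF; fun_prop

lemma stdNormalPDF_pos (x : ℝ) : 0 < stdNormalPDF x :=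
  div_pos (Real.exp_pos _) (Real.sqrt_pos.2 (by positivity))

lemma integrable_stdNormalPDF : Integrable stdNormalPDF := by
  have h := (integrable_exp_neg_mul_sq (by norm_num : (0 : ℝ) < 1 / 2)).div_const
    (Real.sqrt (2 * Real.pi))
  convert h using 2 with x
  rw [stdNormalPDF]
  ring_nf

lemma hasDerivAt_stdNormalCDF (x : ℝ) : HasDerivAt stdNormalCDF (stdNormalPDF x) x := by
  have hCDF : stdNormalCDF = fun y => stdNormalCDF 0 + ∫ t in (0 : ℝ)..y, stdNormalPDF t := by
    ext y
    have := intervalIntegral.integral_Iic_sub_Iic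
      (integrable_stdNormalPDF.integrableOn (s := Set.Iic 0))
      (integrable_stdNormalPDF.integrableOn (s := Set.Iic y))
    simp only [stdNormalCDF, stdNormalPDF] at this ⊢
    linarith
  rw [hCDF]
  exact (intervalIntegral.integral_hasDerivAt_right
    (continuous_stdNormalPDF.intervalIntegrable _ _)
    continuous_stdNormalPDF.aestronglyMeasurable.stronglyMeasurableAtFilter
    continuous_stdNormalPDF.continuousAt).const_add _

lemma exp_mul_stdNormalPDF_reflect (a β : ℝ) {s : ℝ} (hs : 0 < s) :
    Real.exp (-2 * β * a) * stdNormalPDF ((-a + β * s) / Real.sqrt s) =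
      stdNormalPDF ((a + β * s) / Real.sqrt s) := by
  unfold stdNormalPDF
  rw [← mul_div_assoc, ← Real.exp_add, div_pow, div_pow, Real.sq_sqrt hs.le]
  congr 2
  field_simp
  ring

lemma hasDerivAt_add_mul_div_sqrt (c β : ℝ) {s : ℝ} (hs : 0 < s) :
    HasDerivAt (fun s => (c + β * s) / Real.sqrt s)
      ((β * s - c) / (2 * s * Real.sqrt s)) s := by
  have hlin : HasDerivAt (fun s => c + β * s) β s := by
    simpa using ((hasDerivAt_id s).const_mul β).const_add c
  have hsqrt : 0 < Real.sqrt s := Real.sqrt_pos.2 hs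
  refine (hlin.div (Real.hasDerivAt_sqrt hs.ne') hsqrt.ne').congr_deriv ?_
  rw [Real.sq_sqrt hs.le]
  field_simp
  rw [Real.sq_sqrt hs.le]
  ring

noncomputable def at1pSurvival (a β s : ℝ) : ℝ :=
  stdNormalCDF ((a + β * s) / Real.sqrt s) -
    Real.exp (-2 * β * a) * stdNormalCDF ((-a + β * s) / Real.sqrt s)

lemma hasDerivAt_at1pSurvival (a β : ℝ) {s : ℝ} (hs : 0 < s) :
    HasDerivAt (at1pSurvival a β)
      (-a * stdNormalPDF ((a + β * s) / Real.sqrt s) / (s * Real.sqrt s)) s := by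
  have hA := (hasDerivAt_stdNormalCDF _).comp s (hasDerivAt_add_mul_div_sqrt a β hs)
  have hB := (hasDerivAt_stdNormalCDF _).comp s (hasDerivAt_add_mul_div_sqrt (-a) β hs)
  refine (hA.sub (hB.const_mul (Real.exp (-2 * β * a)))).congr_deriv ?_
  rw [← mul_assoc, exp_mul_stdNormalPDF_reflect a β hs]
  have hsqrt : 0 < Real.sqrt s := Real.sqrt_pos.2 hs
  field_simp
  ring

theorem antitoneOn_at1pSurvival {a : ℝ} (β : ℝ) (ha : 0 < a) :
    AntitoneOn (at1pSurvival a β) (Set.Ioi 0) := by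
  have hderiv (s : ℝ) (hs : s ∈ Set.Ioi 0) := hasDerivAt_at1pSurvival a β (Set.mem_Ioi.1 hs)
  refine antitoneOn_of_hasDerivWithinAt_nonpos (convex_Ioi 0)
    (f' := fun s => -a * stdNormalPDF ((a + β * s) / Real.sqrt s) / (s * Real.sqrt s))
    (fun s hs => (hderiv s hs).continuousAt.continuousWithinAt) ?_ ?_ <;> rw [interior_Ioi]
  · exact fun s hs => (hderiv s hs).hasDerivWithinAt
  · exact fun s hs => div_nonpos_of_nonpos_of_nonneg
      (mul_nonpos_of_nonpos_of_nonneg (neg_nonpos.2 ha.le) (stdNormalPDF_pos _).le)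
      (mul_nonneg (le_of_lt hs) (Real.sqrt_nonneg s))

/-- The AT1P survival probability
`f(s) = Φ((a + βs)/√s) - exp(-2βa) Φ((-a + βs)/√s)` is nonincreasing in the cumulative
variance `s` on `(0, ∞)`. -/
theorem stmt_4 (a β : ℝ) (ha : 0 < a) :
    AntitoneOn
      (fun s : ℝ =>
        stdNormalCDF ((a + β * s) / Real.sqrt s) -
          Real.exp (-2 * β * a) * stdNormalCDF ((-a + β * s) / Real.sqrt s))
      (Set.Ioi 0) :=
  antitoneOn_at1pSurvival β ha
end

section
/- Fix $s > 0$ and $\beta \ge 0$, and define $g(a) = \Phi\left(\frac{a + \beta s}{\sqrt{s}}\right) - e^{-2\beta a}\,\Phi\left(\frac{-a + \beta s}{\sqrt{s}}\right)$ for $a > 0$. Then $g$ is strictly increasing in $a$, and $\lim_{a \to 0^+} g(a) = 0$, $\lim_{a \to \infty} g(a) = 1$. -/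
open Real Filter MeasureTheory

noncomputable def stdGauss (u : ℝ) : ℝ := Real.exp (-u ^ 2 / 2) / Real.sqrt (2 * Real.pi)

lemma stdGauss_cont : Continuous stdGauss := by
  unfold stdGauss; fun_prop

lemma stdGauss_pos (u : ℝ) : 0 < stdGauss u := by
  unfold stdGauss; positivity

lemma stdGauss_integrable : Integrable stdGauss := by
  have h : stdGauss = fun u => Real.exp (-(1/2) * u ^ 2) * (Real.sqrt (2 * Real.pi))⁻¹ := by
    funext u; unfold stdGauss; rw [div_eq_mul_inv]; ring_nf
  rw [h]
  exact (integrable_exp_neg_mul_sq (by norm_num)).mul_const _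

lemma stdGauss_total : ∫ u, stdGauss u = 1 := by
  have h : stdGauss = fun u => Real.exp (-(1/2) * u ^ 2) * (Real.sqrt (2 * Real.pi))⁻¹ := by
    funext u; unfold stdGauss; rw [div_eq_mul_inv]; ring_nf
  rw [h, MeasureTheory.integral_mul_const, integral_gaussian]
  rw [show Real.pi / (1/2) = 2 * Real.pi by ring]
  rw [mul_inv_cancel₀]
  positivity

lemma cdf_eq (y : ℝ) : stdNormalCDF y = stdNormalCDF 0 + ∫ t in (0:ℝ)..y, stdGauss t := by
  have h := intervalIntegral.integral_Iic_sub_Iic (μ := volume) (f := stdGauss)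
    (stdGauss_integrable.integrableOn) (stdGauss_integrable.integrableOn) (a := 0) (b := y)
  unfold stdNormalCDF
  simp only [stdGauss] at h ⊢
  linarith

lemma cdf_hasDerivAt (x : ℝ) : HasDerivAt stdNormalCDF (stdGauss x) x := by
  have h : HasDerivAt (fun y => stdNormalCDF 0 + ∫ t in (0:ℝ)..y, stdGauss t) (stdGauss x) x := by
    refine HasDerivAt.const_add _ ?_
    exact intervalIntegral.integral_hasDerivAt_right
      (stdGauss_integrable.intervalIntegrable)
      (stdGauss_cont.aestronglyMeasurable.stronglyMeasurableAtFilter)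
      stdGauss_cont.continuousAt
  exact h.congr_of_eventuallyEq (Filter.Eventually.of_forall fun y => cdf_eq y)

lemma cdf_nonneg (x : ℝ) : 0 ≤ stdNormalCDF x := by
  apply MeasureTheory.setIntegral_nonneg measurableSet_Iic
  intro u _; positivity

lemma cdf_le_one (x : ℝ) : stdNormalCDF x ≤ 1 := by
  rw [← stdGauss_total]
  exact MeasureTheory.setIntegral_le_integral stdGauss_integrable
    (Filter.Eventually.of_forall fun u => (stdGauss_pos u).le)

lemma cdf_tendsto_atTop : Tendsto stdNormalCDF atTop (nhds 1) := by
  have h := (MeasureTheory.aecover_Iic (μ := volume) (l := atTop)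
    tendsto_id).integral_tendsto_of_countably_generated stdGauss_integrable
  rwa [stdGauss_total] at h

lemma cdf_tendsto_atBot : Tendsto stdNormalCDF atBot (nhds 0) := by
  have key : ∀ x : ℝ, stdNormalCDF x = 1 - ∫ u in Set.Ioi x, stdGauss u := by
    intro x
    have := intervalIntegral.integral_Iic_add_Ioi (μ := volume) (b := x) (f := stdGauss)
      stdGauss_integrable.integrableOn stdGauss_integrable.integrableOn
    rw [stdGauss_total] at this
    unfold stdNormalCDF; simp only [stdGauss] at this ⊢; linarith
  have h := (MeasureTheory.aecover_Ioi (μ := volume) (l := atBot)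
    tendsto_id).integral_tendsto_of_countably_generated stdGauss_integrable
  rw [stdGauss_total] at h
  have : Tendsto (fun x : ℝ => 1 - ∫ u in Set.Ioi x, stdGauss u) atBot (nhds (1 - 1)) :=
    tendsto_const_nhds.sub h
  rw [show (0:ℝ) = 1 - 1 by norm_num]
  exact this.congr fun x => (key x).symm

lemma cdf_continuous : Continuous stdNormalCDF :=
  continuous_iff_continuousAt.2 fun x => (cdf_hasDerivAt x).continuousAt

/-- For fixed cumulative variance `s > 0` and `β ≥ 0`, the AT1P survival probability
`g(a) = Φ((a + βs)/√s) - exp(-2βa) Φ((-a + βs)/√s)` is strictly increasing in the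
log-distance `a` to the barrier, tends to `0` as `a → 0⁺` and to `1` as `a → ∞`. -/
theorem stmt_6 (s β : ℝ) (hs : 0 < s) (hβ : 0 ≤ β) :
    StrictMonoOn
        (fun a : ℝ =>
          stdNormalCDF ((a + β * s) / Real.sqrt s) -
            Real.exp (-2 * β * a) * stdNormalCDF ((-a + β * s) / Real.sqrt s))
        (Set.Ioi 0) ∧
      Tendsto
        (fun a : ℝ =>
          stdNormalCDF ((a + β * s) / Real.sqrt s) -
            Real.exp (-2 * β * a) * stdNormalCDF ((-a + β * s) / Real.sqrt s))
        (nhdsWithin 0 (Set.Ioi 0)) (nhds 0) ∧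
      Tendsto
        (fun a : ℝ =>
          stdNormalCDF ((a + β * s) / Real.sqrt s) -
            Real.exp (-2 * β * a) * stdNormalCDF ((-a + β * s) / Real.sqrt s))
        atTop (nhds 1) := by
  have hr : 0 < Real.sqrt s := Real.sqrt_pos.2 hs
  set g : ℝ → ℝ := fun a =>
    stdNormalCDF ((a + β * s) / Real.sqrt s) -
      Real.exp (-2 * β * a) * stdNormalCDF ((-a + β * s) / Real.sqrt s) with hgdef
  have hder : ∀ a : ℝ, HasDerivAt g
      (stdGauss ((a + β * s) / Real.sqrt s) * (1 / Real.sqrt s) -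
        (Real.exp (-2 * β * a) * (-2 * β) * stdNormalCDF ((-a + β * s) / Real.sqrt s) +
          Real.exp (-2 * β * a) * (stdGauss ((-a + β * s) / Real.sqrt s) * (-1 / Real.sqrt s)))) a := by
    intro a
    have h1 : HasDerivAt (fun a : ℝ => (a + β * s) / Real.sqrt s) (1 / Real.sqrt s) a :=
      ((hasDerivAt_id a).add_const (β * s)).div_const _
    have hc1 := (cdf_hasDerivAt ((a + β * s) / Real.sqrt s)).comp a h1
    have h2 : HasDerivAt (fun a : ℝ => -2 * β * a) (-2 * β) a := by
      simpa using (hasDerivAt_id a).const_mul (-2 * β)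
    have hexp := h2.exp
    have h3 : HasDerivAt (fun a : ℝ => (-a + β * s) / Real.sqrt s) (-1 / Real.sqrt s) a := by
      have := (((hasDerivAt_id a).neg).add_const (β * s)).div_const (Real.sqrt s)
      simpa using this
    have hc2 := (cdf_hasDerivAt ((-a + β * s) / Real.sqrt s)).comp a h3
    have hmul := hexp.mul hc2
    exact hc1.sub hmul
  have hpos : ∀ a : ℝ, 0 <
      stdGauss ((a + β * s) / Real.sqrt s) * (1 / Real.sqrt s) -
        (Real.exp (-2 * β * a) * (-2 * β) * stdNormalCDF ((-a + β * s) / Real.sqrt s) +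
          Real.exp (-2 * β * a) * (stdGauss ((-a + β * s) / Real.sqrt s) * (-1 / Real.sqrt s))) := by
    intro a
    have t1 : 0 < stdGauss ((a + β * s) / Real.sqrt s) * (1 / Real.sqrt s) :=
      mul_pos (stdGauss_pos _) (by positivity)
    have t2 : 0 ≤ 2 * β * Real.exp (-2 * β * a) * stdNormalCDF ((-a + β * s) / Real.sqrt s) :=
      mul_nonneg (mul_nonneg (by linarith) (Real.exp_pos _).le) (cdf_nonneg _)
    have t3 : 0 < Real.exp (-2 * β * a) * (stdGauss ((-a + β * s) / Real.sqrt s) * (1 / Real.sqrt s)) :=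
      mul_pos (Real.exp_pos _) (mul_pos (stdGauss_pos _) (by positivity))
    have key : stdGauss ((a + β * s) / Real.sqrt s) * (1 / Real.sqrt s) -
        (Real.exp (-2 * β * a) * (-2 * β) * stdNormalCDF ((-a + β * s) / Real.sqrt s) +
          Real.exp (-2 * β * a) * (stdGauss ((-a + β * s) / Real.sqrt s) * (-1 / Real.sqrt s)))
        = stdGauss ((a + β * s) / Real.sqrt s) * (1 / Real.sqrt s) +
          2 * β * Real.exp (-2 * β * a) * stdNormalCDF ((-a + β * s) / Real.sqrt s) +
          Real.exp (-2 * β * a) * (stdGauss ((-a + β * s) / Real.sqrt s) * (1 / Real.sqrt s)) := by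
      ring
    rw [key]
    linarith
  have hcont : Continuous g := by
    apply Continuous.sub
    · exact cdf_continuous.comp (by fun_prop)
    · exact (by fun_prop : Continuous fun a : ℝ => Real.exp (-2 * β * a)).mul
        (cdf_continuous.comp (by fun_prop))
  refine ⟨?_, ?_, ?_⟩
  · apply strictMonoOn_of_deriv_pos (convex_Ioi 0) hcont.continuousOn
    intro x hx
    rw [(hder x).deriv]
    exact hpos x
  · have h0 : g 0 = 0 := by
      simp [hgdef]
    have := hcont.tendsto 0
    rw [h0] at this
    exact this.mono_left nhdsWithin_le_nhds
  · have hA : Tendsto (fun a : ℝ => (a + β * s) / Real.sqrt s) atTop atTop :=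
      (tendsto_atTop_add_const_right atTop (β * s) tendsto_id).atTop_div_const hr
    have hB : Tendsto (fun a : ℝ => (-a + β * s) / Real.sqrt s) atTop atBot := by
      have hneg : Tendsto (fun a : ℝ => -a + β * s) atTop atBot := by
        apply Filter.tendsto_atBot_add_const_right
        exact tendsto_neg_atTop_atBot
      exact hneg.atBot_div_const hr
    have h1 : Tendsto (fun a : ℝ => stdNormalCDF ((a + β * s) / Real.sqrt s)) atTop (nhds 1) :=
      cdf_tendsto_atTop.comp hA
    have h2' : Tendsto (fun a : ℝ => stdNormalCDF ((-a + β * s) / Real.sqrt s)) atTop (nhds 0) :=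
      cdf_tendsto_atBot.comp hB
    have h2 : Tendsto (fun a : ℝ =>
        Real.exp (-2 * β * a) * stdNormalCDF ((-a + β * s) / Real.sqrt s)) atTop (nhds 0) := by
      apply tendsto_of_tendsto_of_tendsto_of_le_of_le' tendsto_const_nhds h2'
      · exact Filter.Eventually.of_forall fun a =>
          mul_nonneg (Real.exp_pos _).le (cdf_nonneg _)
      · filter_upwards [Filter.eventually_ge_atTop (0 : ℝ)] with a ha
        apply mul_le_of_le_one_left (cdf_nonneg _)
        apply Real.exp_le_one_iff.2
        nlinarith
    have := h1.sub h2
    rw [sub_zero] at this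
    exact this
end
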